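/- arXiv:2209.09365 — 2 statements merged into one kernel-verified Lean document; each statement's English description precedes it below -/
import Mathlib

section
/- Let s ≥ 1 and n ≥ 0 be integers, let (A_{k,p}) be a finitely supported family of complex numbers indexed by pairs (k,p) with k a nonzero multi-index and p = (p₀,…,pₙ) an (n+1)-tuple of nonnegative integers, and let 0 < ν̃ ≤ 1. Then there is a unique family (C_m) of real numbers indexed by nonzero multi-indices satisfying the majorant recursion (R2); every C_m is nonnegative; and there exists R > 0 such that C_m ≤ R^{|m|} for every nonzero multi-index m. -/
/-- Sum of `∏ t, C(f t)` over all ordered `p`-tuples `f` of nonzero multi-indices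
with `f 0 + ⋯ + f (p-1) = l` (the quantity `S(l,p)` of the majorant recursion).
For `p = 0` it equals `1` if `l = 0` and `0` otherwise. -/
noncomputable def tupleSumR (s : ℕ) (C : (Fin s → ℕ) → ℝ) (p : ℕ) (l : Fin s → ℕ) : ℝ :=
  ∑ᶠ f ∈ {f : Fin p → Fin s → ℕ | (∀ t, f t ≠ 0) ∧ (∑ t, f t) = l}, ∏ t, C (f t)

/-- The majorant recursion (R2):
`ν̃·C_m = Σ_{0<k≤m} Σ_p |A_{k,p}| Σ_{l⁽⁰⁾+⋯+l⁽ⁿ⁾=m−k} ∏_j S(l⁽ʲ⁾, p_j)`. -/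
def MajorantRec (s n : ℕ) (ν' : ℝ) (A : (Fin s → ℕ) → (Fin (n + 1) → ℕ) → ℂ)
    (C : (Fin s → ℕ) → ℝ) : Prop :=
  ∀ m : Fin s → ℕ, m ≠ 0 →
    ν' * C m =
      ∑ᶠ k ∈ {k : Fin s → ℕ | k ≠ 0 ∧ k ≤ m},
        ∑ᶠ p : Fin (n + 1) → ℕ,
          ‖A k p‖ *
            ∑ᶠ ls ∈ {ls : Fin (n + 1) → Fin s → ℕ | (∑ j, ls j) = m - k},
              ∏ j, tupleSumR s C (p j) (ls j)

/-!
The right side of the recursion at `m` involves `C` only at nonzero multi-indices strictly below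
`m` in the product order (because `k ≠ 0`), so well-founded recursion gives existence and
uniqueness, and nonnegativity follows by the same induction.

For the bound one proves `C m ≤ R ^ |m| * ∏ i, (m i + 1)⁻²` by induction. The weight
`∏ i, (m i + 1)⁻²` is submultiplicative under convolution up to the factor `16 ^ s`, so an ordered
`p`-fold convolution of such bounds costs only `16 ^ (s p)`; the shift by `k ≠ 0` gains a factor
`R`, which pays for the finitely many coefficients `‖A k p‖` once `R` is large.
-/

open Finset

section WellFoundedRecursion

variable {α β : Type*} [LT α]

def DependsOnlyOnLT (p : α → Prop) (T : (α → β) → α → β) : Prop :=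
  ∀ f g x, (∀ y < x, p y → f y = g y) → T f x = T g x

variable [WellFoundedLT α] {p : α → Prop} {T : (α → β) → α → β}

theorem DependsOnlyOnLT.exists_fixedPoint [Inhabited β] (hT : DependsOnlyOnLT p T) :
    ∃ f, T f = f := by
  classical
  let f : α → β := WellFoundedLT.fix fun x rec =>
    T (fun y => if h : y < x then rec y h else default) x
  refine ⟨f, funext fun x => ?_⟩
  rw [show f x = _ from WellFoundedLT.fix_eq _ x]
  exact hT _ _ x fun y hy _ => by rw [dif_pos hy]

theorem DependsOnlyOnLT.eq_of_fixed (hT : DependsOnlyOnLT p T) {f g : α → β}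
    (hf : ∀ x, p x → T f x = f x) (hg : ∀ x, p x → T g x = g x) :
    ∀ x, p x → f x = g x := by
  intro x
  induction x using WellFoundedLT.induction with
  | _ x ih =>
    intro hx
    rw [← hf x hx, ← hg x hx]
    exact hT f g x ih

end WellFoundedRecursion

section Tuples

variable {ι : Type*} {p : ℕ} {l : ι → ℕ}

theorem le_of_sum_eq {f : Fin p → ι → ℕ} (h : ∑ t, f t = l) (t : Fin p) : f t ≤ l :=
  h ▸ single_le_sum (fun _ _ => zero_le) (mem_univ t)

theorem tsub_lt_self_of_ne_zero {k m : ι → ℕ} (hk : k ≠ 0) (hkm : k ≤ m) : m - k < m := by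
  refine lt_of_le_of_ne tsub_le_self fun h => hk ?_
  rw [tsub_eq_iff_eq_add_of_le hkm] at h
  exact left_eq_add.1 h

variable [Fintype ι] [DecidableEq ι]

def tuplesSumTo (p : ℕ) (l : ι → ℕ) : Finset (Fin p → ι → ℕ) :=
  {f ∈ Fintype.piFinset fun _ => Iic l | ∑ t, f t = l}

@[simp]
theorem mem_tuplesSumTo {f : Fin p → ι → ℕ} : f ∈ tuplesSumTo p l ↔ ∑ t, f t = l := by
  simpa [tuplesSumTo] using fun h t => le_of_sum_eq h t

theorem finsum_mem_eq_sum_tuplesSumTo {M : Type*} [AddCommMonoid M] (G : (Fin p → ι → ℕ) → M) :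
    ∑ᶠ f ∈ {f : Fin p → ι → ℕ | ∑ t, f t = l}, G f = ∑ f ∈ tuplesSumTo p l, G f := by
  have : {f : Fin p → ι → ℕ | ∑ t, f t = l} = tuplesSumTo p l := by ext; simp
  rw [this, finsum_mem_coe_finset]

theorem sum_tuplesSumTo_succ {M : Type*} [AddCommMonoid M] (G : (Fin (p + 1) → ι → ℕ) → M) :
    ∑ f ∈ tuplesSumTo (p + 1) l, G f =
      ∑ a ∈ Iic l, ∑ g ∈ tuplesSumTo p (l - a), G (Fin.cons a g) := by
  rw [sum_sigma']
  refine (sum_nbij' (fun x => Fin.cons x.1 x.2) (fun f => ⟨f 0, Fin.tail f⟩)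
    ?_ ?_ ?_ ?_ ?_).symm
  · rintro ⟨a, g⟩ h
    simp only [mem_sigma, mem_Iic, mem_tuplesSumTo] at h ⊢
    rw [Fin.sum_cons, h.2, add_tsub_cancel_of_le h.1]
  · intro f h
    simp only [mem_sigma, mem_Iic, mem_tuplesSumTo] at h ⊢
    rw [Fin.sum_univ_succ] at h
    exact ⟨h ▸ le_self_add, by rw [← h, add_tsub_cancel_left]; rfl⟩
  · rintro ⟨a, g⟩ _
    simp
  · exact fun f _ => Fin.cons_self_tail f
  · exact fun _ _ => rfl

def tupleConv (c : Fin p → (ι → ℕ) → ℝ) (l : ι → ℕ) : ℝ :=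
  ∑ f ∈ tuplesSumTo p l, ∏ t, c t (f t)

theorem tupleConv_zero (c : Fin 0 → (ι → ℕ) → ℝ) (l : ι → ℕ) :
    tupleConv c l = if l = 0 then 1 else 0 := by
  have : tuplesSumTo 0 l = if l = 0 then {Fin.elim0} else ∅ := by
    ext f
    split_ifs with hl <;> simp [hl, eq_comm, Subsingleton.elim f Fin.elim0]
  rw [tupleConv, this]
  split_ifs <;> simp

theorem tupleConv_succ (c : Fin (p + 1) → (ι → ℕ) → ℝ) (l : ι → ℕ) :
    tupleConv c l = ∑ a ∈ Iic l, c 0 a * tupleConv (Fin.tail c) (l - a) := by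
  simp only [tupleConv, sum_tuplesSumTo_succ, Fin.prod_univ_succ, Fin.cons_zero, Fin.cons_succ,
    mul_sum]
  rfl

theorem tupleConv_congr {c c' : Fin p → (ι → ℕ) → ℝ} (h : ∀ t, ∀ a ≤ l, c t a = c' t a) :
    tupleConv c l = tupleConv c' l :=
  sum_congr rfl fun _ hf => prod_congr rfl fun t _ =>
    h t _ (le_of_sum_eq (mem_tuplesSumTo.1 hf) t)

theorem tupleConv_nonneg {c : Fin p → (ι → ℕ) → ℝ} (h : ∀ t, ∀ a ≤ l, 0 ≤ c t a) :
    0 ≤ tupleConv c l :=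
  sum_nonneg fun _ hf => prod_nonneg fun t _ => h t _ (le_of_sum_eq (mem_tuplesSumTo.1 hf) t)

end Tuples

section Weight

-- One of `a`, `b` is at least `(a + b) / 2`, so its factor is at most `4 / (a + b + 1) ^ 2`.
theorem inv_sq_mul_inv_sq_le (a b : ℕ) :
    (((a : ℝ) + 1) ^ 2)⁻¹ * (((b : ℝ) + 1) ^ 2)⁻¹ ≤
      4 * ((((a + b : ℕ) : ℝ) + 1) ^ 2)⁻¹ * ((((a : ℝ) + 1) ^ 2)⁻¹ + (((b : ℝ) + 1) ^ 2)⁻¹) := by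
  have ha : (0 : ℝ) ≤ a := a.cast_nonneg
  have hb : (0 : ℝ) ≤ b := b.cast_nonneg
  push_cast
  field_simp
  nlinarith [sq_nonneg ((a : ℝ) - b), mul_nonneg ha hb]

theorem sum_inv_sq_le_two (L : ℕ) : ∑ a ∈ Iic L, (((a : ℝ) + 1) ^ 2)⁻¹ ≤ 2 := by
  have h := sum_Ioo_inv_sq_le (α := ℝ) 0 (L + 2)
  rw [← Ico_add_one_left_eq_Ioo, sum_Ico_eq_sum_range] at h
  rw [← Nat.range_succ_eq_Iic]
  simpa [add_comm] using h

theorem sum_inv_sq_mul_inv_sq_sub_le (L : ℕ) :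
    ∑ a ∈ Iic L, (((a : ℝ) + 1) ^ 2)⁻¹ * ((((L - a : ℕ) : ℝ) + 1) ^ 2)⁻¹ ≤
      16 * (((L : ℝ) + 1) ^ 2)⁻¹ := by
  set g : ℕ → ℝ := fun a => (((a : ℝ) + 1) ^ 2)⁻¹
  have hreflect : ∑ a ∈ Iic L, g (L - a) = ∑ a ∈ Iic L, g a := by
    rw [← Nat.range_succ_eq_Iic, ← sum_range_reflect]
    refine sum_congr rfl fun a ha => ?_
    rw [Nat.add_sub_cancel, Nat.sub_sub_self (Nat.lt_succ_iff.1 (mem_range.1 ha))]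
  calc ∑ a ∈ Iic L, g a * g (L - a)
      ≤ ∑ a ∈ Iic L, 4 * g L * (g a + g (L - a)) := sum_le_sum fun a ha => by
        simpa [g, Nat.add_sub_cancel' (mem_Iic.1 ha)] using inv_sq_mul_inv_sq_le a (L - a)
    _ = 4 * g L * (2 * ∑ a ∈ Iic L, g a) := by
        rw [← mul_sum, sum_add_distrib, hreflect, two_mul]
    _ ≤ 4 * g L * (2 * 2) := by gcongr; exact sum_inv_sq_le_two L
    _ = 16 * g L := by ring

theorem inv_sq_sub_le {K M : ℕ} (h : K ≤ M) :
    ((((M - K : ℕ) : ℝ) + 1) ^ 2)⁻¹ ≤ ((K : ℝ) + 1) ^ 2 * (((M : ℝ) + 1) ^ 2)⁻¹ := by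
  have hK : (0 : ℝ) ≤ K := K.cast_nonneg
  have hMK : (K : ℝ) ≤ M := by exact_mod_cast h
  rw [Nat.cast_sub h, ← div_eq_mul_inv, inv_le_comm₀ (by positivity) (by positivity),
    inv_div, div_le_iff₀ (by positivity)]
  nlinarith [mul_nonneg hK (sub_nonneg.2 hMK)]

variable {ι : Type*} [Fintype ι] {R : ℝ}

noncomputable def majorantWeight (R : ℝ) (m : ι → ℕ) : ℝ :=
  ∏ i, R ^ m i * (((m i : ℝ) + 1) ^ 2)⁻¹

theorem majorantWeight_nonneg (hR : 0 ≤ R) (m : ι → ℕ) : 0 ≤ majorantWeight R m := by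
  unfold majorantWeight; positivity

@[simp]
theorem majorantWeight_zero (R : ℝ) : majorantWeight R (0 : ι → ℕ) = 1 := by
  simp [majorantWeight]

theorem majorantWeight_le_pow_sum (hR : 0 ≤ R) (m : ι → ℕ) :
    majorantWeight R m ≤ R ^ ∑ i, m i := by
  rw [← prod_pow_eq_pow_sum]
  refine prod_le_prod (fun i _ => by positivity) fun i _ =>
    mul_le_of_le_one_right (by positivity) ?_
  exact inv_le_one_of_one_le₀ (one_le_pow₀ (by simp))

theorem sum_Iic_majorantWeight_mul_le [DecidableEq ι] (hR : 0 ≤ R) (l : ι → ℕ) :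
    ∑ a ∈ Iic l, majorantWeight R a * majorantWeight R (l - a) ≤
      16 ^ Fintype.card ι * majorantWeight R l := by
  have hcoord (L : ℕ) : ∑ a ∈ Iic L, R ^ a * (((a : ℝ) + 1) ^ 2)⁻¹ *
      (R ^ (L - a) * ((((L - a : ℕ) : ℝ) + 1) ^ 2)⁻¹) ≤
        16 * (R ^ L * (((L : ℝ) + 1) ^ 2)⁻¹) := by
    calc _ = R ^ L * ∑ a ∈ Iic L, (((a : ℝ) + 1) ^ 2)⁻¹ * ((((L - a : ℕ) : ℝ) + 1) ^ 2)⁻¹ := by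
          rw [mul_sum]
          refine sum_congr rfl fun a ha => ?_
          rw [← Nat.add_sub_cancel' (mem_Iic.1 ha)]
          simp only [Nat.add_sub_cancel_left, pow_add]
          ring
      _ ≤ R ^ L * (16 * (((L : ℝ) + 1) ^ 2)⁻¹) := by
          gcongr; exact sum_inv_sq_mul_inv_sq_sub_le L
      _ = _ := by ring
  calc ∑ a ∈ Iic l, majorantWeight R a * majorantWeight R (l - a)
      = ∏ i, ∑ a ∈ Iic (l i), R ^ a * (((a : ℝ) + 1) ^ 2)⁻¹ *
          (R ^ (l i - a) * ((((l i - a : ℕ) : ℝ) + 1) ^ 2)⁻¹) := by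
        rw [prod_univ_sum]
        exact sum_congr rfl fun a _ => by
          simp only [majorantWeight, ← prod_mul_distrib, Pi.sub_apply]
    _ ≤ ∏ i, 16 * (R ^ l i * (((l i : ℝ) + 1) ^ 2)⁻¹) :=
        prod_le_prod (fun i _ => sum_nonneg fun a _ => by positivity) fun i _ => hcoord (l i)
    _ = 16 ^ Fintype.card ι * majorantWeight R l := by
        rw [prod_mul_distrib, prod_const, card_univ, majorantWeight]

theorem majorantWeight_tsub_mul_le (hR : 1 ≤ R) {k m : ι → ℕ} (hk : k ≠ 0) (hkm : k ≤ m) :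
    majorantWeight R (m - k) * R ≤ (∏ i, ((k i : ℝ) + 1) ^ 2) * majorantWeight R m := by
  have hR0 : 0 ≤ R := zero_le_one.trans hR
  have hdeg : ∑ i, k i ≠ 0 := fun h => hk (funext fun i => (sum_eq_zero_iff.1 h) i (mem_univ i))
  calc majorantWeight R (m - k) * R ≤ majorantWeight R (m - k) * ∏ i, R ^ k i := by
        rw [prod_pow_eq_pow_sum]
        exact mul_le_mul_of_nonneg_left (le_self_pow₀ hR hdeg) (majorantWeight_nonneg hR0 _)
    _ ≤ (∏ i, ((k i : ℝ) + 1) ^ 2) * majorantWeight R m := by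
        simp only [majorantWeight, ← prod_mul_distrib]
        refine prod_le_prod (fun i _ => by positivity) fun i _ => ?_
        rw [Pi.sub_apply, mul_right_comm, ← pow_add, Nat.sub_add_cancel (hkm i), mul_left_comm]
        exact mul_le_mul_of_nonneg_left (inv_sq_sub_le (hkm i)) (by positivity)

theorem tupleConv_le_majorantWeight [DecidableEq ι] {p : ℕ} {c : Fin p → (ι → ℕ) → ℝ}
    {a : Fin p → ℝ} {l : ι → ℕ} (hR : 0 ≤ R) (ha : ∀ t, 0 ≤ a t)
    (hc : ∀ t, ∀ b ≤ l, 0 ≤ c t b ∧ c t b ≤ a t * majorantWeight R b) :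
    tupleConv c l ≤ (∏ t, a t) * (16 ^ Fintype.card ι) ^ p * majorantWeight R l := by
  induction p generalizing l with
  | zero =>
    rw [tupleConv_zero]
    split_ifs with hl
    · simp [hl]
    · simpa using majorantWeight_nonneg hR l
  | succ p ih =>
    set B : ℝ := 16 ^ Fintype.card ι
    have htail (b : ι → ℕ) : tupleConv (Fin.tail c) (l - b) ≤
        (∏ t, Fin.tail a t) * B ^ p * majorantWeight R (l - b) :=
      ih (fun t => ha t.succ) fun t b' hb' => hc t.succ b' (hb'.trans tsub_le_self)
    have ha' : 0 ≤ ∏ t, a t := prod_nonneg fun t _ => ha t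
    rw [tupleConv_succ]
    calc ∑ b ∈ Iic l, c 0 b * tupleConv (Fin.tail c) (l - b)
        ≤ ∑ b ∈ Iic l, a 0 * majorantWeight R b *
            ((∏ t, Fin.tail a t) * B ^ p * majorantWeight R (l - b)) := by
          refine sum_le_sum fun b hb => mul_le_mul (hc 0 b (mem_Iic.1 hb)).2 (htail b) ?_
            (mul_nonneg (ha 0) (majorantWeight_nonneg hR b))
          exact tupleConv_nonneg fun t b' hb' => (hc t.succ b' (hb'.trans tsub_le_self)).1
      _ = (∏ t, a t) * B ^ p *
            ∑ b ∈ Iic l, majorantWeight R b * majorantWeight R (l - b) := by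
          rw [Fin.prod_univ_succ, mul_sum]
          exact sum_congr rfl fun b _ => by simp only [Fin.tail]; ring
      _ ≤ (∏ t, a t) * B ^ p * (B * majorantWeight R l) := by
          gcongr
          exact sum_Iic_majorantWeight_mul_le hR l
      _ = (∏ t, a t) * B ^ (p + 1) * majorantWeight R l := by ring

end Weight

section TupleSumR

variable {s : ℕ} {C : (Fin s → ℕ) → ℝ} {p : ℕ} {l : Fin s → ℕ}

theorem prod_update_zero (C : (Fin s → ℕ) → ℝ) (f : Fin p → Fin s → ℕ) :
    ∏ t, Function.update C 0 0 (f t) = if ∀ t, f t ≠ 0 then ∏ t, C (f t) else 0 := by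
  split_ifs with hf
  · exact prod_congr rfl fun t _ => Function.update_of_ne (hf t) _ _
  · obtain ⟨t, ht⟩ := not_forall_not.1 hf
    exact prod_eq_zero (mem_univ t) (by simp [ht])

theorem tupleSumR_eq_tupleConv (C : (Fin s → ℕ) → ℝ) (p : ℕ) (l : Fin s → ℕ) :
    tupleSumR s C p l = tupleConv (fun _ : Fin p => Function.update C 0 0) l := by
  have hset : {f : Fin p → Fin s → ℕ | (∀ t, f t ≠ 0) ∧ ∑ t, f t = l} =
      ↑{f ∈ tuplesSumTo p l | ∀ t, f t ≠ 0} := by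
    ext f; simp [and_comm]
  simp only [tupleSumR, tupleConv, hset, finsum_mem_coe_finset, prod_update_zero, sum_filter]

theorem tupleSumR_congr {C' : (Fin s → ℕ) → ℝ} (h : ∀ b ≤ l, b ≠ 0 → C b = C' b) :
    tupleSumR s C p l = tupleSumR s C' p l := by
  simp only [tupleSumR_eq_tupleConv]
  refine tupleConv_congr fun _ b hb => ?_
  by_cases hb0 : b = 0
  · simp [hb0]
  · simp [Function.update_of_ne hb0, h b hb hb0]

theorem tupleSumR_nonneg (h : ∀ b ≤ l, b ≠ 0 → 0 ≤ C b) : 0 ≤ tupleSumR s C p l := by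
  rw [tupleSumR_eq_tupleConv]
  exact tupleConv_nonneg fun _ => (Function.forall_update_iff C fun b x => b ≤ l → 0 ≤ x).2
    ⟨fun _ => le_rfl, fun b hb0 hb => h b hb hb0⟩

theorem tupleSumR_le_majorantWeight {R : ℝ} (hR : 0 ≤ R)
    (h : ∀ b ≤ l, b ≠ 0 → 0 ≤ C b ∧ C b ≤ majorantWeight R b) :
    tupleSumR s C p l ≤ (16 ^ s) ^ p * majorantWeight R l := by
  rw [tupleSumR_eq_tupleConv]
  simpa using tupleConv_le_majorantWeight (a := fun _ => 1) hR (fun _ => zero_le_one) fun _ =>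
    (Function.forall_update_iff C fun b x => b ≤ l → 0 ≤ x ∧ x ≤ 1 * majorantWeight R b).2
      ⟨fun _ => ⟨le_rfl, by simp⟩, fun b hb0 hb => by simpa using h b hb hb0⟩

theorem tupleConv_tupleSumR_le_majorantWeight {R : ℝ} {r : ℕ} {q : Fin r → ℕ} (hR : 0 ≤ R)
    (h : ∀ b ≤ l, b ≠ 0 → 0 ≤ C b ∧ C b ≤ majorantWeight R b) :
    tupleConv (fun j => tupleSumR s C (q j)) l ≤
      (16 ^ s) ^ (∑ j, q j + r) * majorantWeight R l := by
  have := tupleConv_le_majorantWeight (a := fun j => (16 ^ s) ^ q j) hR (fun _ => by positivity)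
    fun j b hb => ⟨tupleSumR_nonneg fun b' hb' hb0 => (h b' (hb'.trans hb) hb0).1,
      tupleSumR_le_majorantWeight hR fun b' hb' hb0 => h b' (hb'.trans hb) hb0⟩
  simpa [prod_pow_eq_pow_sum, pow_add] using this

end TupleSumR

theorem finsum_mem_finsum_eq_sum_filter {α β M : Type*} [AddCommMonoid M] {K : Set α}
    [DecidablePred (· ∈ K)] {F : Finset (α × β)} {G : α × β → M}
    (hG : Function.support G ⊆ F) :
    ∑ᶠ a ∈ K, ∑ᶠ b, G (a, b) = ∑ x ∈ F with x.1 ∈ K, G x := by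
  have hsupp : Function.support (fun x : α × β => if x.1 ∈ K then G x else 0) ⊆ F :=
    fun x hx => hG fun h => hx (by simp [h])
  rw [sum_filter, ← finsum_eq_sum_of_support_subset _ hsupp,
    finsum_curry _ (F.finite_toSet.subset hsupp), finsum_mem_def]
  congr 1
  ext a
  by_cases ha : a ∈ K <;> simp [ha]

section MajorantRHS

-- The product order on multi-indices has no `Decidable` instance.
open Classical

variable {s n : ℕ} {A : (Fin s → ℕ) → (Fin (n + 1) → ℕ) → ℂ}
  {F : Finset ((Fin s → ℕ) × (Fin (n + 1) → ℕ))} {C : (Fin s → ℕ) → ℝ} {m : Fin s → ℕ} {ν R : ℝ}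

noncomputable def majorantRHS (A : (Fin s → ℕ) → (Fin (n + 1) → ℕ) → ℂ)
    (F : Finset ((Fin s → ℕ) × (Fin (n + 1) → ℕ))) (C : (Fin s → ℕ) → ℝ) (m : Fin s → ℕ) : ℝ :=
  ∑ x ∈ F with x.1 ≠ 0 ∧ x.1 ≤ m,
    ‖A x.1 x.2‖ * tupleConv (fun j => tupleSumR s C (x.2 j)) (m - x.1)

noncomputable def majorantConst (A : (Fin s → ℕ) → (Fin (n + 1) → ℕ) → ℂ)
    (F : Finset ((Fin s → ℕ) × (Fin (n + 1) → ℕ))) : ℝ :=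
  ∑ x ∈ F, ‖A x.1 x.2‖ * (16 ^ s) ^ (∑ j, x.2 j + (n + 1)) * ∏ i, ((x.1 i : ℝ) + 1) ^ 2

theorem majorantRec_iff (hF : ∀ k p, A k p ≠ 0 → (k, p) ∈ F) :
    MajorantRec s n ν A C ↔ ∀ m ≠ 0, ν * C m = majorantRHS A F C m := by
  refine forall₂_congr fun m _ => Eq.congr_right ?_
  have hsupp : Function.support (fun x : (Fin s → ℕ) × (Fin (n + 1) → ℕ) =>
      ‖A x.1 x.2‖ * tupleConv (fun j => tupleSumR s C (x.2 j)) (m - x.1)) ⊆ F := by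
    intro x hx
    by_contra hxF
    exact hx (by simp [show A x.1 x.2 = 0 from not_not.1 fun h => hxF (hF _ _ h)])
  simp only [finsum_mem_eq_sum_tuplesSumTo]
  refine (finsum_mem_finsum_eq_sum_filter hsupp).trans ?_
  rw [majorantRHS]
  congr 1

theorem majorantRHS_dependsOnlyOnLT : DependsOnlyOnLT (· ≠ 0) (majorantRHS A F) := by
  intro C C' m h
  refine sum_congr rfl fun x hx => ?_
  obtain ⟨hk, hkm⟩ := (mem_filter.1 hx).2
  congr 1
  refine tupleConv_congr fun j l hl => tupleSumR_congr fun b hb hb0 => h b ?_ hb0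
  exact (hb.trans hl).trans_lt (tsub_lt_self_of_ne_zero hk hkm)

theorem majorantRHS_nonneg (h : ∀ b < m, b ≠ 0 → 0 ≤ C b) : 0 ≤ majorantRHS A F C m := by
  refine sum_nonneg fun x hx => mul_nonneg (norm_nonneg _) ?_
  obtain ⟨hk, hkm⟩ := (mem_filter.1 hx).2
  refine tupleConv_nonneg fun j l hl => tupleSumR_nonneg fun b hb hb0 => ?_
  exact h b ((hb.trans hl).trans_lt (tsub_lt_self_of_ne_zero hk hkm)) hb0

theorem mul_majorantRHS_le (hR : 1 ≤ R)
    (h : ∀ b < m, b ≠ 0 → 0 ≤ C b ∧ C b ≤ majorantWeight R b) :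
    R * majorantRHS A F C m ≤ majorantConst A F * majorantWeight R m := by
  have hR0 : 0 ≤ R := zero_le_one.trans hR
  rw [majorantRHS, majorantConst, mul_sum, sum_mul]
  refine (sum_le_sum fun x hx => ?_).trans (sum_le_sum_of_subset_of_nonneg (filter_subset _ F)
    fun x _ _ => mul_nonneg (by positivity) (majorantWeight_nonneg hR0 m))
  obtain ⟨hk, hkm⟩ := (mem_filter.1 hx).2
  have hconv := tupleConv_tupleSumR_le_majorantWeight (q := x.2) hR0 (l := m - x.1) (C := C)
    fun b hb hb0 => h b (hb.trans_lt (tsub_lt_self_of_ne_zero hk hkm)) hb0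
  set B : ℝ := (16 ^ s) ^ (∑ j, x.2 j + (n + 1))
  calc R * (‖A x.1 x.2‖ * tupleConv (fun j => tupleSumR s C (x.2 j)) (m - x.1))
      = ‖A x.1 x.2‖ * (tupleConv (fun j => tupleSumR s C (x.2 j)) (m - x.1) * R) := by ring
    _ ≤ ‖A x.1 x.2‖ * (B * majorantWeight R (m - x.1) * R) := by gcongr
    _ = ‖A x.1 x.2‖ * B * (majorantWeight R (m - x.1) * R) := by ring
    _ ≤ ‖A x.1 x.2‖ * B * ((∏ i, ((x.1 i : ℝ) + 1) ^ 2) * majorantWeight R m) :=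
        mul_le_mul_of_nonneg_left (majorantWeight_tsub_mul_le hR hk hkm) (by positivity)
    _ = _ := by ring

theorem MajorantRec.nonneg_and_le_majorantWeight (hC : MajorantRec s n ν A C) (hν : 0 < ν)
    (hR : 1 ≤ R) (hF : ∀ k p, A k p ≠ 0 → (k, p) ∈ F) (hRν : majorantConst A F ≤ ν * R) :
    ∀ m ≠ 0, 0 ≤ C m ∧ C m ≤ majorantWeight R m := by
  intro m
  induction m using WellFoundedLT.induction with
  | _ m ih =>
    intro hm
    have hrec := (majorantRec_iff hF).1 hC m hm
    refine ⟨nonneg_of_mul_nonneg_right (hrec ▸ majorantRHS_nonneg fun b hb hb0 =>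
      (ih b hb hb0).1) hν, le_of_mul_le_mul_left ?_ (mul_pos hν (zero_lt_one.trans_le hR))⟩
    calc ν * R * C m = R * majorantRHS A F C m := by rw [← hrec]; ring
      _ ≤ majorantConst A F * majorantWeight R m := mul_majorantRHS_le hR ih
      _ ≤ ν * R * majorantWeight R m := by
        gcongr
        exact majorantWeight_nonneg (zero_le_one.trans hR) m

end MajorantRHS

theorem stmt12_general (s : ℕ) (n : ℕ)
    (A : (Fin s → ℕ) → (Fin (n + 1) → ℕ) → ℂ)
    (hA : {kp : (Fin s → ℕ) × (Fin (n + 1) → ℕ) | A kp.1 kp.2 ≠ 0}.Finite)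
    (ν' : ℝ) (hν'0 : 0 < ν') :
    ∃ C : (Fin s → ℕ) → ℝ,
      MajorantRec s n ν' A C ∧
      (∀ m : Fin s → ℕ, m ≠ 0 → 0 ≤ C m) ∧
      (∃ R > (0 : ℝ), ∀ m : Fin s → ℕ, m ≠ 0 → C m ≤ R ^ (∑ i, m i)) ∧
      (∀ C' : (Fin s → ℕ) → ℝ, MajorantRec s n ν' A C' →
        ∀ m : Fin s → ℕ, m ≠ 0 → C' m = C m) := by
  have hF : ∀ k p, A k p ≠ 0 → (k, p) ∈ hA.toFinset := fun k p h => hA.mem_toFinset.2 h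
  have hrec_iff (C : (Fin s → ℕ) → ℝ) :
      MajorantRec s n ν' A C ↔ ∀ m ≠ 0, majorantRHS A hA.toFinset C m / ν' = C m := by
    simp only [majorantRec_iff hF, div_eq_iff hν'0.ne', mul_comm, eq_comm]
  have hT : DependsOnlyOnLT (· ≠ 0) fun C m => majorantRHS A hA.toFinset C m / ν' :=
    fun C C' m h => congrArg (· / ν') (majorantRHS_dependsOnlyOnLT C C' m h)
  obtain ⟨C, hC⟩ := hT.exists_fixedPoint
  have hCrec : MajorantRec s n ν' A C := (hrec_iff C).2 fun m _ => congrFun hC m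
  set R := max 1 (majorantConst A hA.toFinset / ν')
  have hR : 1 ≤ R := le_max_left _ _
  have hbounds := hCrec.nonneg_and_le_majorantWeight hν'0 hR hF
    (by rw [← div_le_iff₀' hν'0]; exact le_max_right _ _)
  refine ⟨C, hCrec, fun m hm => (hbounds m hm).1, ⟨R, zero_lt_one.trans_le hR, fun m hm =>
    (hbounds m hm).2.trans (majorantWeight_le_pow_sum (zero_le_one.trans hR) m)⟩,
    fun C' hC' => hT.eq_of_fixed ((hrec_iff C').1 hC') fun m _ => congrFun hC m⟩

/-- existence, nonnegativity, uniqueness and exponential bound for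
the solution of the majorant recursion (the paper's application of the implicit
function theorem to the majorant equation). -/
theorem stmt12 (s : ℕ) (hs : 1 ≤ s) (n : ℕ)
    (A : (Fin s → ℕ) → (Fin (n + 1) → ℕ) → ℂ)
    (hA : {kp : (Fin s → ℕ) × (Fin (n + 1) → ℕ) | A kp.1 kp.2 ≠ 0}.Finite)
    (ν' : ℝ) (hν'0 : 0 < ν') (hν'1 : ν' ≤ 1) :
    ∃ C : (Fin s → ℕ) → ℝ,
      MajorantRec s n ν' A C ∧
      (∀ m : Fin s → ℕ, m ≠ 0 → 0 ≤ C m) ∧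
      (∃ R > (0 : ℝ), ∀ m : Fin s → ℕ, m ≠ 0 → C m ≤ R ^ (∑ i, m i)) ∧
      (∀ C' : (Fin s → ℕ) → ℝ, MajorantRec s n ν' A C' →
        ∀ m : Fin s → ℕ, m ≠ 0 → C' m = C m) :=
  stmt12_general s n A hA ν' hν'0
end

section
/- Let c₀ ≥ 1/2 be a real number and define the sequence (c_m)_{m≥0} of real numbers by c₁ = c₀² / ( e^{−√2·π}·(1 − e^{−√2·π}) ) and, for m ≥ 2, c_m = ( 2c₀·c_{m−1} + Σ_{j=1}^{m−2} c_j·c_{m−1−j} ) / ( e^{−√2·π·m}·(1 − e^{−√2·π·m}) ). Then every c_m is positive, c_m ≥ e^{√2·π·m}·c_{m−1} for every m ≥ 2, and the power series Σ_{m≥1} c_m·w^m has radius of convergence equal to 0. -/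
/-- Example 1 of the paper. The coefficients `c_m = c_{m,0}` of the
subseries `ψ₊` satisfy the stated recurrence, are positive, grow superexponentially,
and the power series `Σ_{m≥1} c_m w^m` has radius of convergence `0` (i.e. it is not
summable at any `w ≠ 0`). -/
theorem stmt16 (c₀ : ℝ) (hc₀ : 1 / 2 ≤ c₀) (c : ℕ → ℝ) (h0 : c 0 = c₀)
    (h1 : c 1 = c₀ ^ 2 / (Real.exp (-(Real.sqrt 2 * Real.pi)) *
      (1 - Real.exp (-(Real.sqrt 2 * Real.pi)))))
    (hrec : ∀ m : ℕ, 2 ≤ m →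
      c m = (2 * c₀ * c (m - 1) + ∑ j ∈ Finset.Icc 1 (m - 2), c j * c (m - 1 - j)) /
        (Real.exp (-(Real.sqrt 2 * Real.pi * m)) *
          (1 - Real.exp (-(Real.sqrt 2 * Real.pi * m))))) :
    (∀ m : ℕ, 0 < c m) ∧
    (∀ m : ℕ, 2 ≤ m → Real.exp (Real.sqrt 2 * Real.pi * m) * c (m - 1) ≤ c m) ∧
    (∀ w : ℂ, w ≠ 0 → ¬ Summable fun m : ℕ => (c (m + 1) : ℂ) * w ^ (m + 1)) := by
  have hc0 : (0:ℝ) < c₀ := by linarith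
  have hs2 : (0:ℝ) < Real.sqrt 2 := Real.sqrt_pos.2 (by norm_num)
  have hpi := Real.pi_pos
  have hsp : (0:ℝ) < Real.sqrt 2 * Real.pi := mul_pos hs2 hpi
  have hexplt : ∀ m : ℕ, 1 ≤ m → Real.exp (-(Real.sqrt 2 * Real.pi * m)) < 1 := by
    intro m hm
    have hm1 : (1:ℝ) ≤ m := by exact_mod_cast hm
    have hx : 0 < Real.sqrt 2 * Real.pi * m := by nlinarith
    calc Real.exp (-(Real.sqrt 2 * Real.pi * m)) < Real.exp 0 :=
          Real.exp_lt_exp.2 (by linarith)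
      _ = 1 := Real.exp_zero
  have hD : ∀ m : ℕ, 1 ≤ m → 0 < Real.exp (-(Real.sqrt 2 * Real.pi * m)) *
      (1 - Real.exp (-(Real.sqrt 2 * Real.pi * m))) := by
    intro m hm
    have h1' := hexplt m hm
    have h2' := Real.exp_pos (-(Real.sqrt 2 * Real.pi * m))
    nlinarith
  have hpos : ∀ m, 0 < c m := by
    intro m
    induction m using Nat.strong_induction_on with
    | _ m ih =>
      match m, ih with
      | 0, _ => rw [h0]; exact hc0
      | 1, _ =>
        rw [h1]
        apply div_pos (by positivity)
        have := hD 1 le_rfl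
        norm_num at this
        exact this
      | (n+2), ih =>
        rw [hrec (n+2) (by omega)]
        apply div_pos _ (hD (n+2) (by omega))
        have hS : 0 ≤ ∑ j ∈ Finset.Icc 1 (n+2-2), c j * c (n+2-1-j) := by
          apply Finset.sum_nonneg
          intro j hj
          simp only [Finset.mem_Icc] at hj
          exact le_of_lt (mul_pos (ih j (by omega)) (ih (n+2-1-j) (by omega)))
        have h1' : 0 < c (n+2-1) := ih (n+1) (by omega)
        nlinarith
  have hgrow : ∀ m : ℕ, 2 ≤ m → Real.exp (Real.sqrt 2 * Real.pi * m) * c (m - 1) ≤ c m := by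
    intro m hm
    set x := Real.sqrt 2 * Real.pi * (m:ℝ) with hx
    have he : Real.exp x * Real.exp (-x) = 1 := by
      rw [← Real.exp_add]; simp
    have hD' := hD m (by omega)
    have he1 := hexplt m (by omega)
    have hS : 0 ≤ ∑ j ∈ Finset.Icc 1 (m-2), c j * c (m-1-j) := by
      apply Finset.sum_nonneg
      intro j hj
      exact le_of_lt (mul_pos (hpos j) (hpos _))
    have hcm1 := hpos (m-1)
    rw [hrec m hm, le_div_iff₀ hD']
    have key : Real.exp x * c (m-1) * (Real.exp (-x) * (1 - Real.exp (-x)))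
        = c (m-1) * (1 - Real.exp (-x)) := by
      calc Real.exp x * c (m-1) * (Real.exp (-x) * (1 - Real.exp (-x)))
          = (Real.exp x * Real.exp (-x)) * (c (m-1) * (1 - Real.exp (-x))) := by ring
        _ = c (m-1) * (1 - Real.exp (-x)) := by rw [he, one_mul]
    rw [key]
    have hE0 := Real.exp_pos (-x)
    nlinarith [mul_pos hcm1 hE0, mul_nonneg hcm1.le (by linarith : (0:ℝ) ≤ 2*c₀ - 1)]
  refine ⟨hpos, hgrow, ?_⟩
  intro w hw hsum
  set r := ‖w‖ with hr
  have hr0 : 0 < r := norm_pos_iff.2 hw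
  obtain ⟨M, hM⟩ := exists_nat_ge (Real.log (1/r) / (Real.sqrt 2 * Real.pi))
  have hone : ∀ m : ℕ, M ≤ m → 1 ≤ Real.exp (Real.sqrt 2 * Real.pi * m) * r := by
    intro m hm
    have hmm : (M:ℝ) ≤ m := by exact_mod_cast hm
    rw [div_le_iff₀ hsp] at hM
    have h1' : Real.log (1/r) ≤ Real.sqrt 2 * Real.pi * m := by nlinarith
    have h2' : 1/r ≤ Real.exp (Real.sqrt 2 * Real.pi * m) := by
      calc 1/r = Real.exp (Real.log (1/r)) := (Real.exp_log (by positivity)).symm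
        _ ≤ _ := Real.exp_le_exp.2 h1'
    rw [div_le_iff₀ hr0] at h2'
    linarith
  set a : ℕ → ℝ := fun m => c m * r ^ m with ha
  have hstep : ∀ m : ℕ, M + 2 ≤ m → a (m-1) ≤ a m := by
    intro m hm
    have hg := hgrow m (by omega)
    have h1' := hone m (by omega)
    have hrm : r ^ m = r * r ^ (m-1) := by
      rw [← pow_succ']
      congr 1
      omega
    have hnn : (0:ℝ) ≤ c (m-1) * r ^ (m-1) := le_of_lt (mul_pos (hpos _) (by positivity))
    calc a (m-1) = 1 * (c (m-1) * r ^ (m-1)) := by simp [ha]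
      _ ≤ (Real.exp (Real.sqrt 2 * Real.pi * m) * r) * (c (m-1) * r ^ (m-1)) :=
          mul_le_mul_of_nonneg_right h1' hnn
      _ = (Real.exp (Real.sqrt 2 * Real.pi * m) * c (m-1)) * r ^ m := by rw [hrm]; ring
      _ ≤ c m * r ^ m := mul_le_mul_of_nonneg_right hg (by positivity)
  have hmono : ∀ k : ℕ, a (M+2) ≤ a (M+2+k) := by
    intro k
    induction k with
    | zero => simp
    | succ n ihn =>
      have := hstep (M+2+n+1) (by omega)
      have heq : M+2+n+1-1 = M+2+n := by omega
      rw [heq] at this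
      calc a (M+2) ≤ a (M+2+n) := ihn
        _ ≤ a (M+2+n+1) := this
      
  have haM : 0 < a (M+2) := mul_pos (hpos _) (by positivity)
  have htend : Filter.Tendsto (fun m : ℕ => ‖(c (m + 1) : ℂ) * w ^ (m + 1)‖)
      Filter.atTop (nhds 0) := by
    simpa using hsum.tendsto_atTop_zero.norm
  have hev : ∀ᶠ m in Filter.atTop, ‖(c (m + 1) : ℂ) * w ^ (m + 1)‖ < a (M+2) :=
    htend.eventually (gt_mem_nhds haM)
  obtain ⟨m, hm1, hm2⟩ := (hev.and (Filter.eventually_ge_atTop (M+2))).exists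
  have hnorm : ‖(c (m + 1) : ℂ) * w ^ (m + 1)‖ = a (m+1) := by
    rw [norm_mul, norm_pow, Complex.norm_real, Real.norm_eq_abs,
      abs_of_pos (hpos (m+1))]
  have hge : a (M+2) ≤ a (m+1) := by
    have := hmono (m+1-(M+2))
    have heq : M+2+(m+1-(M+2)) = m+1 := by omega
    rwa [heq] at this
  rw [hnorm] at hm1
  linarith
end
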